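/- Let f : ℝ^n → ℝ^n be differentiable with symmetric Jacobian whose spectral radius satisfies η(∇f(x)) ≤ 1 for all x, and define ρ(x) = (1/2)⟨x, x − f(x)⟩. If additionally f is locally homogeneous (so ∇f(x)x = f(x)), then ∇ρ(x) = x − f(x). -/

import Mathlib

open Set

lemma key_fderiv_apply {n : ℕ} (f : EuclideanSpace ℝ (Fin n) → EuclideanSpace ℝ (Fin n))
    (hdiff : Differentiable ℝ f)
    (hhom : ∀ x : EuclideanSpace ℝ (Fin n), ∃ ε₀ > (0 : ℝ),
      ∀ ε : ℝ, 0 < ε → ε < ε₀ → f ((1 + ε) • x) = (1 + ε) • f x)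
    (x : EuclideanSpace ℝ (Fin n)) : fderiv ℝ f x x = f x := by
  obtain ⟨ε₀, hε₀, h⟩ := hhom x
  set φ : ℝ → EuclideanSpace ℝ (Fin n) := fun t => f ((1 + t) • x) - (1 + t) • f x with hφ
  have h1 : HasDerivAt (fun t : ℝ => (1 + t) • x) x 0 := by
    simpa using ((hasDerivAt_id (0:ℝ)).const_add 1).smul_const x
  have h2 : HasDerivAt (fun t : ℝ => f ((1 + t) • x)) (fderiv ℝ f x x) 0 := by
    have := (hdiff ((1 + (0:ℝ)) • x)).hasFDerivAt.comp_hasDerivAt 0 h1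
    simpa [Function.comp_def] using this
  have h3 : HasDerivAt (fun t : ℝ => (1 + t) • f x) (f x) 0 := by
    simpa using ((hasDerivAt_id (0:ℝ)).const_add 1).smul_const (f x)
  have hD : HasDerivWithinAt φ (fderiv ℝ f x x - f x) (Ici 0) 0 :=
    (h2.sub h3).hasDerivWithinAt
  have heq : φ =ᶠ[nhdsWithin 0 (Ici 0)] fun _ => 0 := by
    filter_upwards [Ico_mem_nhdsGE_of_mem (⟨le_refl 0, hε₀⟩ : (0:ℝ) ∈ Ico 0 ε₀)] with t ht
    rcases eq_or_lt_of_le ht.1 with rfl | htpos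
    · simp [φ]
    · simp [φ, h t htpos ht.2]
  have hzero : HasDerivWithinAt φ 0 (Ici 0) 0 := by
    refine (hasDerivWithinAt_const 0 (Ici 0) (0:EuclideanSpace ℝ (Fin n))).congr_of_eventuallyEq
      heq ?_
    simp [φ]
  have hfd := (uniqueDiffOn_Ici (0:ℝ) 0 Set.self_mem_Ici).eq hD.hasFDerivWithinAt hzero.hasFDerivWithinAt
  have := congrArg (fun L => L 1) hfd
  simpa [sub_eq_zero] using this

theorem red_regularizer_gradient (n : ℕ)
    (f : EuclideanSpace ℝ (Fin n) → EuclideanSpace ℝ (Fin n))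
    (hdiff : Differentiable ℝ f)
    (hsym : ∀ x u v : EuclideanSpace ℝ (Fin n),
      (inner ℝ (fderiv ℝ f x u) v : ℝ) = inner ℝ u (fderiv ℝ f x v))
    (hspec : ∀ x, spectralRadius ℝ (fderiv ℝ f x) ≤ 1)
    (hhom : ∀ x : EuclideanSpace ℝ (Fin n), ∃ ε₀ > (0 : ℝ),
      ∀ ε : ℝ, 0 < ε → ε < ε₀ → f ((1 + ε) • x) = (1 + ε) • f x)
    (ρ : EuclideanSpace ℝ (Fin n) → ℝ)
    (hρ : ∀ x, ρ x = (1 / 2) * inner ℝ x (x - f x)) :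
    ∀ x, HasGradientAt ρ (x - f x) x := by
  intro x
  rw [hasGradientAt_iff_hasFDerivAt]
  have hρfun : ρ = fun y => (1 / 2 : ℝ) * inner ℝ y (y - f y) := funext hρ
  have hid : HasFDerivAt (fun y : EuclideanSpace ℝ (Fin n) => y)
      (ContinuousLinearMap.id ℝ (EuclideanSpace ℝ (Fin n))) x := hasFDerivAt_id x
  have hg : HasFDerivAt (fun y => y - f y)
      (ContinuousLinearMap.id ℝ (EuclideanSpace ℝ (Fin n)) - fderiv ℝ f x) x :=
    hid.sub (hdiff x).hasFDerivAt
  have hin := (hid.inner (𝕜 := ℝ) hg).const_mul (1 / 2 : ℝ)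
  rw [hρfun]
  convert hin using 1
  · rfl
  ext v : 1
  have hkey : fderiv ℝ f x x = f x := key_fderiv_apply f hdiff hhom x
  have hsx : (inner ℝ x (fderiv ℝ f x v) : ℝ) = inner ℝ (f x) v := by
    rw [← hsym x x v, hkey]
  simp only [ContinuousLinearMap.smul_apply, ContinuousLinearMap.comp_apply,
    fderivInnerCLM_apply, ContinuousLinearMap.prod_apply, ContinuousLinearMap.id_apply,
    ContinuousLinearMap.sub_apply, InnerProductSpace.toDual_apply_apply, smul_eq_mul]
  simp only [inner_sub_left, inner_sub_right, hsx, real_inner_comm v x,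
    real_inner_comm v (f x)]
  ring
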